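/- Let (p*, α*) solve the convex problem min Σᵢ c_{i,2}(pᵢ² + Σ_Ω αᵢ²) + c_{i,1}pᵢ subject to Σᵢ pᵢ + W − D = 0, Σᵢ αᵢ = 1, αᵢ ≥ 0, and pᵢ^min ≤ pᵢ ≤ pᵢ^max (ignoring transmission constraints, i.e., an uncongested network). Let π* = λ^bal be the multiplier of the power balance constraint and τᵢ* be defined from the stationarity condition for αᵢ. Then for each generator i, (pᵢ*, αᵢ*) maximizes the individual profit π*·pᵢ + τᵢ*·αᵢ − c_{i,1}pᵢ − c_{i,2}(pᵢ² + Σ_Ω αᵢ²) over pᵢ ∈ [pᵢ^min, pᵢ^max], αᵢ ≥ 0. -/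
import Mathlib


open Finset

/-- in an uncongested network, prices derived from the KKT multipliers of the
system problem support a competitive equilibrium: each generator's optimal dispatch and
participation factor maximize its individual profit at those prices. -/
theorem market_equilibrium_uncongested
    {n : ℕ} (c₁ c₂ pmin pmax : Fin n → ℝ) (W D SΩ : ℝ)
    (hc₂ : ∀ i, 0 < c₂ i) (hSΩ : 0 < SΩ)
    (pstar αstar : Fin n → ℝ)
    -- primal feasibility (optimal solution of the system problem)
    (hbal : ∑ i, pstar i + W - D = 0)
    (hαsum : ∑ i, αstar i = 1)
    (hαpos : ∀ i, 0 ≤ αstar i)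
    (hbox : ∀ i, pstar i ∈ Set.Icc (pmin i) (pmax i))
    -- KKT multipliers: lamBal for the balance, νp/νm for the box, lamAlpha for Σα = 1, μ for α ≥ 0
    (lamBal lamAlpha : ℝ) (νp νm μ : Fin n → ℝ)
    (hνp : ∀ i, 0 ≤ νp i) (hνm : ∀ i, 0 ≤ νm i) (hμ : ∀ i, 0 ≤ μ i)
    (hcsp : ∀ i, νp i * (pstar i - pmax i) = 0)
    (hcsm : ∀ i, νm i * (pmin i - pstar i) = 0)
    (hcsα : ∀ i, μ i * αstar i = 0)
    (hstat_p : ∀ i, c₁ i + 2 * c₂ i * pstar i - lamBal + νp i - νm i = 0)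
    (hstat_α : ∀ i, 2 * c₂ i * SΩ * αstar i - lamAlpha - μ i = 0)
    -- prices: energy price `π* = lamBal`, reserve price `τᵢ*` from the α-stationarity
    (π : ℝ) (hπ : π = lamBal)
    (τ : Fin n → ℝ) (hτ : ∀ i, τ i = lamAlpha) :
    ∀ i, ∀ p α : ℝ, pmin i ≤ p → p ≤ pmax i → 0 ≤ α →
      π * p + τ i * α - c₁ i * p - c₂ i * (p ^ 2 + SΩ * α ^ 2)
        ≤ π * pstar i + τ i * αstar i
            - c₁ i * pstar i - c₂ i * (pstar i ^ 2 + SΩ * αstar i ^ 2) := by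
  intro i p α hp1 hp2 hα
  have hs := hstat_p i
  have hsa := hstat_α i
  have h1 := hcsp i
  have h2 := hcsm i
  have h3 := hcsα i
  have hb := hbox i
  have hc := (hc₂ i).le
  have hνpi := hνp i
  have hνmi := hνm i
  have hμi := hμ i
  have hq1 : νp i * (pstar i - p) ≥ 0 := by nlinarith [mul_nonneg hνpi (sub_nonneg.2 hp2)]
  have hq2 : νm i * (p - pstar i) ≥ 0 := by nlinarith [mul_nonneg hνmi (sub_nonneg.2 hp1)]
  have hq3 : μ i * α ≥ 0 := mul_nonneg hμi hα
  have e1 : (c₁ i + 2 * c₂ i * pstar i - lamBal + νp i - νm i) * (pstar i - p) = 0 := by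
    rw [hs]; ring
  have e2 : (2 * c₂ i * SΩ * αstar i - lamAlpha - μ i) * (αstar i - α) = 0 := by
    rw [hsa]; ring
  rw [hπ, hτ i]
  nlinarith [sq_nonneg (p - pstar i), sq_nonneg (α - αstar i),
    mul_nonneg hc (sq_nonneg (p - pstar i)),
    mul_nonneg (mul_nonneg hc hSΩ.le) (sq_nonneg (α - αstar i))]
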